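/- arXiv:2311.14657 — 6 statements merged into one kernel-verified Lean document; each statement's English description precedes it below -/
import Mathlib

section
/- Let (S, I) solve the SIR system S' = -β(t)SI - α(t)S, I' = β(t)SI - γ(t)I with continuous rates β ∈ [β₁, β₂], γ ∈ [γ₁, γ₂] (positive bounds), control α ∈ [0,1], and initial data x, y ≥ 0. Then lim_{t→∞} I(t) = 0. -/
/-!
Both `S` and `I` stay nonnegative, since each solves a linear equation `u' = c u` with locally
bounded `c`. Then `S` and `S + I` are nonincreasing and bounded below, so they converge and `I`
has a limit `ℓ ≥ 0`. As `(S + I)' = -α S - γ I ≤ -γ₁ I`, a positive `ℓ` would drive `S + I`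
to `-∞`.
-/

open Set Filter Topology

lemma antitoneOn_Ici_of_hasDerivAt_nonpos {f f' : ℝ → ℝ} {a : ℝ}
    (hf : ∀ t ∈ Ici a, HasDerivAt f (f' t) t) (hf' : ∀ t ∈ Ici a, f' t ≤ 0) :
    AntitoneOn f (Ici a) := by
  refine antitoneOn_of_hasDerivWithinAt_nonpos (f' := f') (convex_Ici a)
    (fun t ht => (hf t ht).continuousAt.continuousWithinAt) (fun t ht => ?_) (fun t ht => ?_)
  all_goals rw [interior_Ici] at ht
  exacts [(hf t (Ioi_subset_Ici_self ht)).hasDerivWithinAt, hf' t (Ioi_subset_Ici_self ht)]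

lemma AntitoneOn.exists_tendsto_atTop_of_Ici {f : ℝ → ℝ} {a m : ℝ} (hf : AntitoneOn f (Ici a))
    (hm : ∀ t ∈ Ici a, m ≤ f t) : ∃ l, Tendsto f atTop (𝓝 l) := by
  have hanti : Antitone fun t => f (max t a) := fun s t hst =>
    hf (le_max_right s a) (le_max_right t a) (max_le_max_right a hst)
  have hbdd : BddBelow (range fun t => f (max t a)) := ⟨m, by
    rintro _ ⟨t, rfl⟩
    exact hm _ (le_max_right t a)⟩
  refine ⟨_, (tendsto_atTop_ciInf hanti hbdd).congr' ?_⟩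
  filter_upwards [eventually_ge_atTop a] with t ht
  rw [max_eq_left ht]

/-- A sign change of `u` produces a zero, after which Grönwall's inequality forces `u = 0`. -/
lemma nonneg_of_hasDerivAt_mul_self {u c : ℝ → ℝ} {a : ℝ}
    (hu : ∀ t ∈ Ici a, HasDerivAt u (c t * u t) t)
    (hc : ∀ b, ∃ K, ∀ t ∈ Icc a b, |c t| ≤ K) (ha : 0 ≤ u a) : ∀ t ∈ Ici a, 0 ≤ u t := by
  intro b hb
  by_contra! hub
  have hcont : ContinuousOn u (Icc a b) := fun t ht => (hu t ht.1).continuousAt.continuousWithinAt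
  obtain ⟨τ, hτ, huτ⟩ := intermediate_value_Icc' hb hcont ⟨hub.le, ha⟩
  obtain ⟨K, hK⟩ := hc b
  have hsub : Icc τ b ⊆ Icc a b := Icc_subset_Icc_left hτ.1
  have hzero := eq_zero_of_abs_deriv_le_mul_abs_self_of_eq_zero_right (K := K)
    (hcont.mono hsub) (fun t ht => (hu t (hτ.1.trans ht.1)).hasDerivWithinAt) huτ
    (fun t ht => by
      rw [Real.norm_eq_abs, Real.norm_eq_abs, abs_mul]
      exact mul_le_mul_of_nonneg_right (hK t (hsub (Ico_subset_Icc_self ht))) (abs_nonneg _))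
  exact hub.ne (hzero b ⟨hτ.2, le_rfl⟩)

lemma IsCompact.exists_bound_abs_mul_add {f g h : ℝ → ℝ} {s : Set ℝ} {B D : ℝ} (hs : IsCompact s)
    (hf : ContinuousOn f s) (hg : ∀ t ∈ s, |g t| ≤ B) (hh : ∀ t ∈ s, |h t| ≤ D) :
    ∃ K, ∀ t ∈ s, |g t * f t + h t| ≤ K := by
  obtain ⟨M, hM⟩ := hs.exists_bound_of_continuousOn hf
  refine ⟨B * M + D, fun t ht => ?_⟩
  calc |g t * f t + h t| ≤ |g t| * |f t| + |h t| := by rw [← abs_mul]; exact abs_add_le _ _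
    _ ≤ B * M + D :=
      add_le_add (mul_le_mul (hg t ht) (hM t ht) (abs_nonneg _) ((abs_nonneg _).trans (hg t ht)))
        (hh t ht)

lemma tendsto_atBot_of_hasDerivAt_le_neg {f f' : ℝ → ℝ} {T k : ℝ} (hk : 0 < k)
    (hf : ∀ t ∈ Ici T, HasDerivAt f (f' t) t) (hf' : ∀ t ∈ Ici T, f' t ≤ -k) :
    Tendsto f atTop atBot := by
  have hanti : AntitoneOn (fun t => f t + k * t) (Ici T) :=
    antitoneOn_Ici_of_hasDerivAt_nonpos (fun t ht => (hf t ht).add ((hasDerivAt_id t).const_mul k))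
      (fun t ht => by linarith [hf' t ht])
  have hline : Tendsto (fun t => f T + k * T + -k * t) atTop atBot :=
    tendsto_atBot_add_const_left _ _ (tendsto_id.const_mul_atTop_of_neg (neg_neg_of_pos hk))
  refine tendsto_atBot_mono' _ ?_ hline
  filter_upwards [eventually_ge_atTop T] with t ht
  linarith [hanti self_mem_Ici ht ht]

lemma nonpos_of_tendsto_of_hasDerivAt_le_neg_mul {g g' h : ℝ → ℝ} {T κ b c : ℝ} (hκ : 0 < κ)
    (hg : ∀ t ∈ Ici T, HasDerivAt g (g' t) t) (hg' : ∀ t ∈ Ici T, g' t ≤ -κ * h t)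
    (hgb : Tendsto g atTop (𝓝 b)) (hhc : Tendsto h atTop (𝓝 c)) : c ≤ 0 := by
  by_contra! hc
  obtain ⟨T', hT'⟩ := eventually_atTop.1 (hhc.eventually (eventually_gt_nhds (half_lt_self hc)))
  refine not_tendsto_nhds_of_tendsto_atBot ?_ b hgb
  refine tendsto_atBot_of_hasDerivAt_le_neg (T := max T T') (mul_pos hκ (half_pos hc))
    (fun t ht => hg t (le_of_max_le_left (mem_Ici.1 ht))) (fun t ht => ?_)
  calc g' t ≤ -κ * h t := hg' t (le_of_max_le_left (mem_Ici.1 ht))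
    _ ≤ -(κ * (c / 2)) := by nlinarith [hT' t (le_of_max_le_right (mem_Ici.1 ht))]

section SIR

variable {β γ α S I : ℝ → ℝ} {β₁ β₂ γ₁ γ₂ : ℝ}

theorem sir_infected_nonneg (hβ : ∀ t ≥ (0:ℝ), β t ∈ Icc β₁ β₂)
    (hγ : ∀ t ≥ (0:ℝ), γ t ∈ Icc γ₁ γ₂) (hS : ContinuousOn S (Ici 0))
    (hI : ∀ t ∈ Ici (0:ℝ), HasDerivAt I (β t * S t * I t - γ t * I t) t) (hI0 : 0 ≤ I 0) :
    ∀ t ∈ Ici (0:ℝ), 0 ≤ I t := by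
  refine nonneg_of_hasDerivAt_mul_self (c := fun t => β t * S t + -γ t)
    (fun t ht => by convert hI t ht using 1; ring) (fun b => ?_) hI0
  exact isCompact_Icc.exists_bound_abs_mul_add (hS.mono Icc_subset_Ici_self)
    (fun t ht => abs_le_max_abs_abs (hβ t ht.1).1 (hβ t ht.1).2)
    (fun t ht => (abs_neg (γ t)).trans_le (abs_le_max_abs_abs (hγ t ht.1).1 (hγ t ht.1).2))

theorem sir_susceptible_nonneg (hβ : ∀ t ≥ (0:ℝ), β t ∈ Icc β₁ β₂)
    (hα : ∀ t ≥ (0:ℝ), α t ∈ Icc (0:ℝ) 1) (hI : ContinuousOn I (Ici 0))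
    (hS : ∀ t ∈ Ici (0:ℝ), HasDerivAt S (-(β t) * S t * I t - α t * S t) t) (hS0 : 0 ≤ S 0) :
    ∀ t ∈ Ici (0:ℝ), 0 ≤ S t := by
  refine nonneg_of_hasDerivAt_mul_self (c := fun t => -β t * I t + -α t)
    (fun t ht => by convert hS t ht using 1; ring) (fun b => ?_) hS0
  exact isCompact_Icc.exists_bound_abs_mul_add (hI.mono Icc_subset_Ici_self)
    (fun t ht => (abs_neg (β t)).trans_le (abs_le_max_abs_abs (hβ t ht.1).1 (hβ t ht.1).2))
    (fun t ht => (abs_neg (α t)).trans_le (abs_le_max_abs_abs (hα t ht.1).1 (hα t ht.1).2))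

end SIR

theorem sir_infected_tendsto_zero_general
    (β γ α S I : ℝ → ℝ) (β₁ β₂ γ₁ γ₂ x y : ℝ)
    (hβ₁ : 0 < β₁) (hγ₁ : 0 < γ₁)
    (hβ : ∀ t ≥ (0:ℝ), β t ∈ Set.Icc β₁ β₂)
    (hγ : ∀ t ≥ (0:ℝ), γ t ∈ Set.Icc γ₁ γ₂)
    (hα : ∀ t ≥ (0:ℝ), α t ∈ Set.Icc (0:ℝ) 1)
    (hS : ∀ t ∈ Set.Ici (0:ℝ), HasDerivAt S (-(β t) * S t * I t - α t * S t) t)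
    (hI : ∀ t ∈ Set.Ici (0:ℝ), HasDerivAt I (β t * S t * I t - γ t * I t) t)
    (hS0 : S 0 = x) (hI0 : I 0 = y) (hx : 0 ≤ x) (hy : 0 ≤ y) :
    Filter.Tendsto I Filter.atTop (nhds 0) := by
  have hSc : ContinuousOn S (Ici 0) := fun t ht => (hS t ht).continuousAt.continuousWithinAt
  have hIc : ContinuousOn I (Ici 0) := fun t ht => (hI t ht).continuousAt.continuousWithinAt
  have hI_nonneg := sir_infected_nonneg hβ hγ hSc hI (hI0 ▸ hy)
  have hS_nonneg := sir_susceptible_nonneg hβ hα hIc hS (hS0 ▸ hx)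
  have hN : ∀ t ∈ Ici (0:ℝ), HasDerivAt (S + I) (-(α t * S t) - γ t * I t) t := fun t ht =>
    ((hS t ht).add (hI t ht)).congr_deriv (by ring)
  have hN' : ∀ t ∈ Ici (0:ℝ), -(α t * S t) - γ t * I t ≤ -γ₁ * I t := fun t ht => by
    nlinarith [mul_nonneg (hα t ht).1 (hS_nonneg t ht),
      mul_le_mul_of_nonneg_right (hγ t ht).1 (hI_nonneg t ht)]
  have hSanti : AntitoneOn S (Ici 0) := antitoneOn_Ici_of_hasDerivAt_nonpos hS fun t ht => by
    nlinarith [mul_nonneg (mul_nonneg (hβ₁.trans_le (hβ t ht).1).le (hS_nonneg t ht))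
        (hI_nonneg t ht),
      mul_nonneg (hα t ht).1 (hS_nonneg t ht)]
  have hNanti : AntitoneOn (S + I) (Ici 0) := antitoneOn_Ici_of_hasDerivAt_nonpos hN fun t ht =>
    (hN' t ht).trans (by nlinarith [hI_nonneg t ht])
  obtain ⟨a, ha⟩ := hSanti.exists_tendsto_atTop_of_Ici hS_nonneg
  obtain ⟨b, hb⟩ := hNanti.exists_tendsto_atTop_of_Ici fun t ht =>
    add_nonneg (hS_nonneg t ht) (hI_nonneg t ht)
  have hIlim : Tendsto I atTop (𝓝 (b - a)) := by simpa using hb.sub ha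
  have hle := nonpos_of_tendsto_of_hasDerivAt_le_neg_mul hγ₁ hN hN' hb hIlim
  have hge := ge_of_tendsto hIlim ((eventually_ge_atTop 0).mono hI_nonneg)
  rwa [le_antisymm hle hge] at hIlim

/-- The infected population tends to zero. -/
theorem sir_infected_tendsto_zero
    (β γ α S I : ℝ → ℝ) (β₁ β₂ γ₁ γ₂ x y : ℝ)
    (hβ₁ : 0 < β₁) (hβ₁₂ : β₁ ≤ β₂) (hγ₁ : 0 < γ₁) (hγ₁₂ : γ₁ ≤ γ₂)
    (hβc : Continuous β) (hγc : Continuous γ)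
    (hβ : ∀ t ≥ (0:ℝ), β t ∈ Set.Icc β₁ β₂)
    (hγ : ∀ t ≥ (0:ℝ), γ t ∈ Set.Icc γ₁ γ₂)
    (hαm : Measurable α) (hα : ∀ t ≥ (0:ℝ), α t ∈ Set.Icc (0:ℝ) 1)
    (hS : ∀ t ∈ Set.Ici (0:ℝ), HasDerivAt S (-(β t) * S t * I t - α t * S t) t)
    (hI : ∀ t ∈ Set.Ici (0:ℝ), HasDerivAt I (β t * S t * I t - γ t * I t) t)
    (hS0 : S 0 = x) (hI0 : I 0 = y) (hx : 0 ≤ x) (hy : 0 ≤ y) :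
    Filter.Tendsto I Filter.atTop (nhds 0) :=
  sir_infected_tendsto_zero_general β γ α S I β₁ β₂ γ₁ γ₂ x y hβ₁ hγ₁ hβ hγ hα hS hI hS0 hI0 hx hy
end

section
/- For a datum d = (x, y, t, α) with y ≥ μ > 0, define ū^α(x,y,t) = sup{s ≥ 0 : I^d(s) ≥ μ} and u̲^α(x,y,t) = inf{s ≥ 0 : I^d(s+a) ≤ μ for all a ≥ 0}. If u̲^α(x,y,t) < ū^α(x,y,t), then I^d has a critical point at s* = ū^α(x,y,t), i.e., I^d(s*) = μ and (d/ds)I^d(s*) = 0. -/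
/-- If the lower eradication time is strictly smaller than the upper one,
then `I` has a critical point at the upper one, with value `μ`. -/
theorem sir_gap_implies_critical_point
    (β γ α S I : ℝ → ℝ) (β₁ β₂ γ₁ γ₂ μ x y t : ℝ)
    (hβ₁ : 0 < β₁) (hβ₁₂ : β₁ ≤ β₂) (hγ₁ : 0 < γ₁) (hγ₁₂ : γ₁ ≤ γ₂)
    (hβc : Continuous β) (hγc : Continuous γ)
    (hβ : ∀ s ≥ (0:ℝ), β s ∈ Set.Icc β₁ β₂)
    (hγ : ∀ s ≥ (0:ℝ), γ s ∈ Set.Icc γ₁ γ₂)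
    (hαm : Measurable α) (hα : ∀ s ≥ (0:ℝ), α s ∈ Set.Icc (0:ℝ) 1)
    (hμ : 0 < μ) (hx : 0 ≤ x) (hy : μ ≤ y) (ht : 0 ≤ t)
    (hS : ∀ s ∈ Set.Ici (0:ℝ),
      HasDerivAt S (-(β (t + s)) * S s * I s - α (t + s) * S s) s)
    (hI : ∀ s ∈ Set.Ici (0:ℝ),
      HasDerivAt I (β (t + s) * S s * I s - γ (t + s) * I s) s)
    (hS0 : S 0 = x) (hI0 : I 0 = y)
    (hgap : sInf {s : ℝ | 0 ≤ s ∧ ∀ a ≥ (0:ℝ), I (s + a) ≤ μ} <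
            sSup {s : ℝ | 0 ≤ s ∧ μ ≤ I s}) :
    I (sSup {s : ℝ | 0 ≤ s ∧ μ ≤ I s}) = μ ∧
      HasDerivAt I 0 (sSup {s : ℝ | 0 ≤ s ∧ μ ≤ I s}) := by
  set A : Set ℝ := {s : ℝ | 0 ≤ s ∧ μ ≤ I s} with hA
  set B : Set ℝ := {s : ℝ | 0 ≤ s ∧ ∀ a ≥ (0:ℝ), I (s + a) ≤ μ} with hB
  have hAne : A.Nonempty := ⟨0, le_refl 0, by rw [hI0]; exact hy⟩
  have hInfB : 0 ≤ sInf B := Real.sInf_nonneg fun z hz => hz.1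
  have hAbdd : BddAbove A := by
    by_contra hbd
    rw [Real.sSup_of_not_bddAbove hbd] at hgap
    exact absurd hgap (not_lt.mpr hInfB)
  set s₀ : ℝ := sSup A with hs₀
  have hs₀0 : 0 ≤ s₀ := le_csSup hAbdd ⟨le_refl 0, by rw [hI0]; exact hy⟩
  have hcont : ContinuousAt I s₀ := (hI s₀ hs₀0).continuousAt
  -- I s₀ = μ
  have hIs₀ : I s₀ = μ := by
    have h1 : μ ≤ I s₀ := by
      by_contra h
      push_neg at h
      have := hcont (Iio_mem_nhds h)
      rw [Filter.mem_map, Metric.mem_nhds_iff] at this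
      obtain ⟨ε, hε, hball⟩ := this
      obtain ⟨a, ha, hlt⟩ := exists_lt_of_lt_csSup hAne (by linarith : s₀ - ε < s₀)
      have haball : a ∈ Metric.ball s₀ ε := by
        rw [Metric.mem_ball, Real.dist_eq, abs_lt]
        have := le_csSup hAbdd ha
        constructor <;> linarith
      exact absurd ha.2 (not_le.mpr (hball haball))
    have h2 : I s₀ ≤ μ := by
      by_contra h
      push_neg at h
      have := hcont (Ioi_mem_nhds h)
      rw [Filter.mem_map, Metric.mem_nhds_iff] at this
      obtain ⟨ε, hε, hball⟩ := this
      have hmem : s₀ + ε / 2 ∈ A := by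
        refine ⟨by linarith, le_of_lt ?_⟩
        apply hball
        rw [Metric.mem_ball, Real.dist_eq]
        rw [abs_of_pos (by linarith)]
        linarith
      have := le_csSup hAbdd hmem
      linarith
    linarith
  -- s₀ ∈ B
  have hs₀B : s₀ ∈ B := by
    refine ⟨hs₀0, fun a ha => ?_⟩
    rcases eq_or_lt_of_le ha with rfl | ha'
    · rw [add_zero, hIs₀]
    · by_contra h
      push_neg at h
      have hmem : s₀ + a ∈ A := ⟨by linarith, le_of_lt h⟩
      have := le_csSup hAbdd hmem
      linarith
  -- get b ∈ B with b < s₀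
  obtain ⟨b, hbB, hb⟩ := exists_lt_of_csInf_lt ⟨s₀, hs₀B⟩ hgap
  -- I ≤ μ on (b, ∞), so local max at s₀
  have hmax : IsLocalMax I s₀ := by
    filter_upwards [Ioi_mem_nhds hb] with s hs
    rw [hIs₀]
    have := hbB.2 (s - b) (by simp only [Set.mem_Ioi] at hs; linarith)
    simpa using this
  have hd := hI s₀ hs₀0
  have hzero := hmax.hasDerivAt_eq_zero hd
  rw [hzero] at hd
  exact ⟨hIs₀, hd⟩
end

section
/- Suppose v: (0,∞) × (μ,∞) × (0,∞) → ℝ satisfies the dynamic programming inequality v(x,y,s) ≤ t + v(Σ_a(t), Λ_a(t), t+s) for every constant control a ∈ [0,1] and small t > 0, where (Σ_a, Λ_a) is the SIR flow from (x,y) with constant control a. If v - φ attains a local maximum at (x₀,y₀,t₀) for a C¹ function φ, then -∂_t φ + β(t₀)x₀y₀ ∂_x φ + x₀(∂_x φ)_+ + (γ(t₀) - β(t₀)x₀) y₀ ∂_y φ ≤ 1 at (x₀,y₀,t₀). -/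
/-!
Fix a constant control `a`. Along the SIR trajectory `c` started at `(x₀, y₀, t₀)` the dynamic
programming inequality gives `v(c 0) ≤ t + v(c t)` for small `t > 0`, while the local maximality
of `v - φ` gives `v(c t) - φ(c t) ≤ v(c 0) - φ(c 0)`. Hence `t ↦ t + φ(c t)` lies above its value
at `0` to the right of `0`, so its derivative `1 + Dφ · c'(0)` is nonnegative. Taking `a = 0` and
`a = 1` and maximising the resulting affine expression in `a` yields the Hamiltonian inequality.
-/

open Filter Set Topology

theorem HasDerivAt.nonneg_of_eventually_le_right {g : ℝ → ℝ} {d x : ℝ} (hg : HasDerivAt g d x)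
    (h : ∀ᶠ t in 𝓝[>] x, g x ≤ g t) : 0 ≤ d := by
  have hslope : Tendsto (slope g x) (𝓝[>] x) (𝓝 d) :=
    (hasDerivWithinAt_iff_tendsto_slope' self_notMem_Ioi).1 hg.hasDerivWithinAt
  refine ge_of_tendsto hslope ?_
  filter_upwards [h, self_mem_nhdsWithin] with t hgt (htx : x < t)
  rw [slope_def_field]
  exact div_nonneg (sub_nonneg.2 hgt) (sub_nonneg.2 htx.le)

theorem IsLocalMax.zero_le_one_add_fderiv_of_dpp {E : Type*} [NormedAddCommGroup E]
    [NormedSpace ℝ E] {v φ : E → ℝ} {p w : E} {c : ℝ → E}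
    (hmax : IsLocalMax (fun q => v q - φ q) p)
    (hφ : DifferentiableAt ℝ φ p) (hc : HasDerivAt c w 0) (hc0 : c 0 = p)
    (hdpp : ∀ᶠ t in 𝓝[>] 0, v p ≤ t + v (c t)) : 0 ≤ 1 + fderiv ℝ φ p w := by
  subst hc0
  have hφc : HasDerivAt (fun t => t + φ (c t)) (1 + fderiv ℝ φ (c 0) w) 0 :=
    (hasDerivAt_id 0).add (hφ.hasFDerivAt.comp_hasDerivAt 0 hc)
  have hc_tendsto : Tendsto c (𝓝[>] 0) (𝓝 (c 0)) :=
    hc.continuousAt.tendsto.mono_left nhdsWithin_le_nhds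
  refine hφc.nonneg_of_eventually_le_right ?_
  filter_upwards [hdpp, hc_tendsto.eventually hmax] with t hvt hmaxt
  linarith

theorem ContinuousLinearMap.apply_prod_prod (L : ℝ × ℝ × ℝ →L[ℝ] ℝ) (a b c : ℝ) :
    L (a, b, c) = a * L (1, 0, 0) + b * L (0, 1, 0) + c * L (0, 0, 1) := by
  have hdecomp : ((a, b, c) : ℝ × ℝ × ℝ) = a • (1, 0, 0) + b • (0, 1, 0) + c • (0, 0, 1) := by
    simp
  rw [hdecomp, map_add, map_add, map_smul, map_smul, map_smul, smul_eq_mul, smul_eq_mul,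
    smul_eq_mul]

theorem sir_dpp_implies_viscosity_subsolution_general
    (β γ : ℝ → ℝ) (μ : ℝ)
    (v : ℝ × ℝ × ℝ → ℝ)
    -- dynamic programming inequality along constant-control SIR flows
    (hDPP : ∀ a ∈ Set.Icc (0:ℝ) 1, ∀ x > (0:ℝ), ∀ y > μ, ∀ s > (0:ℝ),
      ∃ Sg Lm : ℝ → ℝ, Sg 0 = x ∧ Lm 0 = y ∧
        (∀ r ∈ Set.Ici (0:ℝ),
          HasDerivAt Sg (-(β (s + r)) * Sg r * Lm r - a * Sg r) r) ∧
        (∀ r ∈ Set.Ici (0:ℝ),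
          HasDerivAt Lm (β (s + r) * Sg r * Lm r - γ (s + r) * Lm r) r) ∧
        ∃ ε > (0:ℝ), ∀ t ∈ Set.Ioo (0:ℝ) ε, v (x, y, s) ≤ t + v (Sg t, Lm t, t + s))
    (φ : ℝ × ℝ × ℝ → ℝ) (hφ : ContDiff ℝ 1 φ)
    (x₀ y₀ t₀ : ℝ) (hx₀ : 0 < x₀) (hy₀ : μ < y₀) (ht₀ : 0 < t₀)
    (hmax : IsLocalMax (fun p => v p - φ p) (x₀, y₀, t₀)) :
    -(fderiv ℝ φ (x₀, y₀, t₀) (0, 0, 1)) +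
        β t₀ * x₀ * y₀ * fderiv ℝ φ (x₀, y₀, t₀) (1, 0, 0) +
        x₀ * max (fderiv ℝ φ (x₀, y₀, t₀) (1, 0, 0)) 0 +
        (γ t₀ - β t₀ * x₀) * y₀ * fderiv ℝ φ (x₀, y₀, t₀) (0, 1, 0) ≤ 1 := by
  have hcontrol : ∀ a ∈ Icc (0:ℝ) 1, 0 ≤ 1 + fderiv ℝ φ (x₀, y₀, t₀)
      (-(β t₀) * x₀ * y₀ - a * x₀, β t₀ * x₀ * y₀ - γ t₀ * y₀, 1) := by
    intro a ha
    obtain ⟨Sg, Lm, hS0, hL0, hSd, hLd, ε, hε, hdpp⟩ := hDPP a ha x₀ hx₀ y₀ hy₀ t₀ ht₀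
    have hSd0 := hSd 0 self_mem_Ici
    have hLd0 := hLd 0 self_mem_Ici
    simp only [add_zero, hS0, hL0] at hSd0 hLd0
    refine hmax.zero_le_one_add_fderiv_of_dpp (c := fun t => (Sg t, Lm t, t + t₀))
      (hφ.differentiable one_ne_zero _)
      (hSd0.prodMk (hLd0.prodMk ((hasDerivAt_id 0).add_const t₀))) (by simp [hS0, hL0]) ?_
    filter_upwards [Ioo_mem_nhdsGT hε] using hdpp
  have h0 := hcontrol 0 ⟨le_rfl, zero_le_one⟩
  have h1 := hcontrol 1 ⟨zero_le_one, le_rfl⟩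
  rw [ContinuousLinearMap.apply_prod_prod] at h0 h1
  rcases le_total (fderiv ℝ φ (x₀, y₀, t₀) (1, 0, 0)) 0 with hA | hA
  · rw [max_eq_right hA]
    linarith
  · rw [max_eq_left hA]
    linarith

/-- The viscosity subsolution property follows from the dynamic
programming inequality. Points are written `(x, y, s)`. -/
theorem sir_dpp_implies_viscosity_subsolution
    (β γ : ℝ → ℝ) (β₁ β₂ γ₁ γ₂ μ : ℝ)
    (hβ₁ : 0 < β₁) (hβ₁₂ : β₁ ≤ β₂) (hγ₁ : 0 < γ₁) (hγ₁₂ : γ₁ ≤ γ₂)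
    (hβc : Continuous β) (hγc : Continuous γ)
    (hβ : ∀ s ≥ (0:ℝ), β s ∈ Set.Icc β₁ β₂)
    (hγ : ∀ s ≥ (0:ℝ), γ s ∈ Set.Icc γ₁ γ₂) (hμ : 0 < μ)
    (v : ℝ × ℝ × ℝ → ℝ)
    -- dynamic programming inequality along constant-control SIR flows
    (hDPP : ∀ a ∈ Set.Icc (0:ℝ) 1, ∀ x > (0:ℝ), ∀ y > μ, ∀ s > (0:ℝ),
      ∃ Sg Lm : ℝ → ℝ, Sg 0 = x ∧ Lm 0 = y ∧
        (∀ r ∈ Set.Ici (0:ℝ),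
          HasDerivAt Sg (-(β (s + r)) * Sg r * Lm r - a * Sg r) r) ∧
        (∀ r ∈ Set.Ici (0:ℝ),
          HasDerivAt Lm (β (s + r) * Sg r * Lm r - γ (s + r) * Lm r) r) ∧
        ∃ ε > (0:ℝ), ∀ t ∈ Set.Ioo (0:ℝ) ε, v (x, y, s) ≤ t + v (Sg t, Lm t, t + s))
    (φ : ℝ × ℝ × ℝ → ℝ) (hφ : ContDiff ℝ 1 φ)
    (x₀ y₀ t₀ : ℝ) (hx₀ : 0 < x₀) (hy₀ : μ < y₀) (ht₀ : 0 < t₀)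
    (hmax : IsLocalMax (fun p => v p - φ p) (x₀, y₀, t₀)) :
    -(fderiv ℝ φ (x₀, y₀, t₀) (0, 0, 1)) +
        β t₀ * x₀ * y₀ * fderiv ℝ φ (x₀, y₀, t₀) (1, 0, 0) +
        x₀ * max (fderiv ℝ φ (x₀, y₀, t₀) (1, 0, 0)) 0 +
        (γ t₀ - β t₀ * x₀) * y₀ * fderiv ℝ φ (x₀, y₀, t₀) (0, 1, 0) ≤ 1 :=
  sir_dpp_implies_viscosity_subsolution_general β γ μ v hDPP φ hφ x₀ y₀ t₀ hx₀ hy₀ ht₀ hmax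
end

section
/- Suppose ū^α(x,y,t) = sup{s : I^d(s) ≥ μ} and u̲^α(x,y,t) = inf{s : I^d(s+a) ≤ μ ∀a ≥ 0}, and suppose that for all data with y ≥ μ₀ every critical value of I exceeds μ (i.e., I'(s) = 0 implies I(s) > μ). Then u̲^α(x,y,t) = ū^α(x,y,t) for every control α and every (x, y, t) with y ≥ μ₀; consequently the infima over controls coincide: ū(x,y,t) = u̲(x,y,t) on [0,∞) × [μ₀,∞) × [0,∞). -/
/-- Key lemma: for a function `I` differentiable on `[0,∞)` with `μ ≤ I 0` whose
critical values (on `[0,∞)`) all exceed `μ`, the two "eradication times" coincide. -/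
lemma sir_key (I : ℝ → ℝ) (μ : ℝ)
    (hI0 : μ ≤ I 0)
    (hdiff : ∀ s ≥ (0:ℝ), DifferentiableAt ℝ I s)
    (hcrit : ∀ s ≥ (0:ℝ), HasDerivAt I 0 s → μ < I s) :
    sInf {s : ℝ | 0 ≤ s ∧ ∀ a ≥ (0:ℝ), I (s + a) ≤ μ} =
    sSup {s : ℝ | 0 ≤ s ∧ μ ≤ I s} := by
  set A : Set ℝ := {s : ℝ | 0 ≤ s ∧ ∀ a ≥ (0:ℝ), I (s + a) ≤ μ} with hA
  set B : Set ℝ := {s : ℝ | 0 ≤ s ∧ μ ≤ I s} with hB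
  have h0B : (0:ℝ) ∈ B := ⟨le_refl 0, hI0⟩
  -- every element of A is an upper bound of B
  have hub : ∀ a ∈ A, a ∈ upperBounds B := by
    rintro a ⟨ha0, haA⟩ b ⟨hb0, hbB⟩
    by_contra hlt
    push_neg at hlt
    have hIb : I b ≤ μ := by
      have := haA (b - a) (by linarith)
      rwa [add_sub_cancel] at this
    have heq : I b = μ := le_antisymm hIb hbB
    have hlm : IsLocalMax I b := by
      filter_upwards [Ioi_mem_nhds hlt] with s hs
      have := haA (s - a) (by simp only [Set.mem_Ioi] at hs; linarith)
      rw [add_sub_cancel] at this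
      rw [heq]; exact this
    have hd0 : deriv I b = 0 := hlm.deriv_eq_zero
    have hD : HasDerivAt I 0 b := hd0 ▸ (hdiff b hb0).hasDerivAt
    have := hcrit b hb0 hD
    rw [heq] at this; exact lt_irrefl μ this
  -- if B is bounded above, then sSup B ∈ A
  have hmem : BddAbove B → sSup B ∈ A := by
    intro hbdd
    have hT0 : (0:ℝ) ≤ sSup B := le_csSup hbdd h0B
    have hgt : ∀ s > sSup B, I s < μ := by
      intro s hs
      by_contra h
      push_neg at h
      exact absurd (le_csSup hbdd ⟨le_trans hT0 hs.le, h⟩) (not_le.2 hs)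
    refine ⟨hT0, fun a ha => ?_⟩
    rcases eq_or_lt_of_le ha with h | h
    · -- a = 0 : use continuity
      rw [← h, add_zero]
      have hc : ContinuousWithinAt I (Set.Ioi (sSup B)) (sSup B) :=
        ((hdiff _ hT0).continuousAt).continuousWithinAt
      refine le_of_tendsto hc ?_
      filter_upwards [self_mem_nhdsWithin] with s hs
      exact (hgt s hs).le
    · exact (hgt _ (by linarith)).le
  by_cases hAne : A.Nonempty
  · obtain ⟨a₀, ha₀⟩ := hAne
    have hbdd : BddAbove B := ⟨a₀, hub a₀ ha₀⟩
    have hTA : sSup B ∈ A := hmem hbdd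
    have hlb : sSup B ∈ lowerBounds A := fun a haA => csSup_le ⟨0, h0B⟩ (hub a haA)
    exact le_antisymm (csInf_le ⟨sSup B, hlb⟩ hTA) (le_csInf ⟨a₀, ha₀⟩ hlb)
  · have hAempty : A = ∅ := Set.not_nonempty_iff_eq_empty.mp hAne
    have hnb : ¬ BddAbove B := fun hbdd => hAne ⟨sSup B, hmem hbdd⟩
    rw [hAempty, Real.sInf_empty, Real.sSup_of_not_bddAbove hnb]

/-- If every critical value of `I` exceeds `μ` (for data with `y ≥ μ₀`),
then the two eradication times coincide for every control, and hence so do the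
two value functions on `[0,∞) × [μ₀,∞) × [0,∞)`. -/
theorem sir_eradication_times_coincide
    (β γ : ℝ → ℝ) (β₁ β₂ γ₁ γ₂ μ μ₀ : ℝ)
    (hβ₁ : 0 < β₁) (hβ₁₂ : β₁ ≤ β₂) (hγ₁ : 0 < γ₁) (hγ₁₂ : γ₁ ≤ γ₂)
    (hβc : Continuous β) (hγc : Continuous γ)
    (hβ : ∀ s ≥ (0:ℝ), β s ∈ Set.Icc β₁ β₂)
    (hγ : ∀ s ≥ (0:ℝ), γ s ∈ Set.Icc γ₁ γ₂)
    (hμ : 0 < μ) (hμμ₀ : μ ≤ μ₀)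
    (Adm : (ℝ → ℝ) → Prop)
    (hAdm : ∀ α, Adm α ↔ (Measurable α ∧ ∀ s ≥ (0:ℝ), α s ∈ Set.Icc (0:ℝ) 1))
    -- the flow associated with the datum (x, y, t, α)
    (SF IF : ℝ → ℝ → ℝ → (ℝ → ℝ) → ℝ → ℝ)
    (hflow : ∀ x ≥ (0:ℝ), ∀ y ≥ μ₀, ∀ t ≥ (0:ℝ), ∀ α, Adm α →
      SF x y t α 0 = x ∧ IF x y t α 0 = y ∧
      (∀ s ∈ Set.Ici (0:ℝ), HasDerivAt (SF x y t α)
        (-(β (t + s)) * SF x y t α s * IF x y t α s - α (t + s) * SF x y t α s) s) ∧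
      (∀ s ∈ Set.Ici (0:ℝ), HasDerivAt (IF x y t α)
        (β (t + s) * SF x y t α s * IF x y t α s - γ (t + s) * IF x y t α s) s))
    -- every critical value of I exceeds μ
    (hcrit : ∀ x ≥ (0:ℝ), ∀ y ≥ μ₀, ∀ t ≥ (0:ℝ), ∀ α, Adm α →
      ∀ s ≥ (0:ℝ), HasDerivAt (IF x y t α) 0 s → μ < IF x y t α s) :
    (∀ x ≥ (0:ℝ), ∀ y ≥ μ₀, ∀ t ≥ (0:ℝ), ∀ α, Adm α →
        sInf {s : ℝ | 0 ≤ s ∧ ∀ a ≥ (0:ℝ), IF x y t α (s + a) ≤ μ} =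
        sSup {s : ℝ | 0 ≤ s ∧ μ ≤ IF x y t α s}) ∧
      ∀ x ≥ (0:ℝ), ∀ y ≥ μ₀, ∀ t ≥ (0:ℝ),
        sInf {r : ℝ | ∃ α, Adm α ∧
            r = sSup {s : ℝ | 0 ≤ s ∧ μ ≤ IF x y t α s}} =
        sInf {r : ℝ | ∃ α, Adm α ∧
            r = sInf {s : ℝ | 0 ≤ s ∧ ∀ a ≥ (0:ℝ), IF x y t α (s + a) ≤ μ}} := by
  have main : ∀ x ≥ (0:ℝ), ∀ y ≥ μ₀, ∀ t ≥ (0:ℝ), ∀ α, Adm α →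
      sInf {s : ℝ | 0 ≤ s ∧ ∀ a ≥ (0:ℝ), IF x y t α (s + a) ≤ μ} =
      sSup {s : ℝ | 0 ≤ s ∧ μ ≤ IF x y t α s} := by
    intro x hx y hy t ht α hα
    obtain ⟨_, hI0, _, hdI⟩ := hflow x hx y hy t ht α hα
    exact sir_key (IF x y t α) μ (by rw [hI0]; exact le_trans hμμ₀ hy)
      (fun s hs => (hdI s hs).differentiableAt)
      (fun s hs hD => hcrit x hx y hy t ht α hα s hs hD)
  refine ⟨main, fun x hx y hy t ht => ?_⟩
  congr 1
  ext r
  constructor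
  · rintro ⟨α, hα, rfl⟩
    exact ⟨α, hα, (main x hx y hy t ht α hα).symm⟩
  · rintro ⟨α, hα, rfl⟩
    exact ⟨α, hα, main x hx y hy t ht α hα⟩
end

section
/- Comparison for smooth solutions: let v¹, v² be bounded C¹ solutions of -∂_t v + v + β(t)xy ∂_x v - x(∂_x v)_- + (γ(t) - β(t)x) y ∂_y v = 0 in Ω × (0,∞), Ω = (0,∞) × (μ₀,∞), with v¹ = v² on the boundary portions {y = μ₀, 0 ≤ x ≤ γ₂/β₁}, {x = 0}, and {t = 0, 0 ≤ x ≤ γ₂/β₁}. Then v¹ = v² on all of the closure of Ω × (0,∞). -/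
/-!
Let `w = x + y + μ₀ t / 2`. If `v₁ - v₂ > ε w` somewhere, then, the `vᵢ` being bounded,
`v₁ - v₂ - ε w` attains a maximum on `[0, ∞) × [μ₀, ∞) × [0, ∞)`, and by continuity both
equations hold there as well. Testing the maximum in the admissible directions gives
`∂_t (v₁ - v₂) ≤ ε μ₀ / 2`, `∂_x (v₁ - v₂) ≥ ε` when `x > 0` (at `x = 0` the `x`-terms vanish),
and `∂_y (v₁ - v₂) = ε` when `y > μ₀`. On `y = μ₀` the boundary data force `x > γ₂ / β₁`,
where the coefficient `(γ - β x) y` is nonpositive, so the one-sided bound suffices. Subtracting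
the equations then yields `0 > 0`. Letting `ε → 0` gives `v₁ ≤ v₂`, and symmetrically.
Since the solutions are `C¹` up to the boundary, the singular term `g(x) / (y - μ₀)` of the
paper's barrier is not needed.
-/

open Set Filter Topology

theorem IsMaxOn.hasFDerivAt_nonpos {E : Type*} [NormedAddCommGroup E] [NormedSpace ℝ E]
    {f : E → ℝ} {f' : E →L[ℝ] ℝ} {s : Set E} {a v : E} {r : ℝ}
    (h : IsMaxOn f s a) (hs : Convex ℝ s) (ha : a ∈ s) (hf : HasFDerivAt f f' a)
    (hr : 0 < r) (hv : a + r • v ∈ s) : f' v ≤ 0 := by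
  have := h.localize.hasFDerivWithinAt_nonpos hf.hasFDerivWithinAt
    (mem_posTangentConeAt_of_segment_subset (hs.segment_subset ha hv))
  rw [map_smul, smul_eq_mul] at this
  exact nonpos_of_mul_nonpos_right this hr

noncomputable section

def sirHamiltonian (β γ x y v a b c : ℝ) : ℝ :=
  -c + v + β * x * y * a - x * max (-a) 0 + (γ - β * x) * y * b

def sirOperator (β γ : ℝ → ℝ) (v : ℝ × ℝ × ℝ → ℝ) (p : ℝ × ℝ × ℝ) : ℝ :=
  sirHamiltonian (β p.2.2) (γ p.2.2) p.1 p.2.1 (v p)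
    (fderiv ℝ v p (1, 0, 0)) (fderiv ℝ v p (0, 1, 0)) (fderiv ℝ v p (0, 0, 1))

def sirDomain (μ₀ : ℝ) : Set (ℝ × ℝ × ℝ) := Ici 0 ×ˢ Ici μ₀ ×ˢ Ici 0

def barrier (μ₀ : ℝ) : ℝ × ℝ × ℝ →L[ℝ] ℝ :=
  ContinuousLinearMap.fst ℝ ℝ (ℝ × ℝ) +
    (ContinuousLinearMap.fst ℝ ℝ ℝ).comp (ContinuousLinearMap.snd ℝ ℝ (ℝ × ℝ)) +
    (μ₀ / 2) • (ContinuousLinearMap.snd ℝ ℝ ℝ).comp (ContinuousLinearMap.snd ℝ ℝ (ℝ × ℝ))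

end

@[simp]
theorem barrier_apply (μ₀ : ℝ) (p : ℝ × ℝ × ℝ) : barrier μ₀ p = p.1 + p.2.1 + μ₀ / 2 * p.2.2 :=
  rfl

@[simp]
theorem mem_sirDomain {μ₀ : ℝ} {p : ℝ × ℝ × ℝ} :
    p ∈ sirDomain μ₀ ↔ 0 ≤ p.1 ∧ μ₀ ≤ p.2.1 ∧ 0 ≤ p.2.2 := by
  simp only [sirDomain, mem_prod, mem_Ici]

theorem closure_Ioi_prod_Ioi_prod_Ioi (μ₀ : ℝ) :
    closure (Ioi (0 : ℝ) ×ˢ Ioi μ₀ ×ˢ Ioi (0 : ℝ)) = sirDomain μ₀ := by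
  simp [sirDomain, closure_prod_eq]

theorem convex_sirDomain (μ₀ : ℝ) : Convex ℝ (sirDomain μ₀) :=
  (convex_Ici _).prod ((convex_Ici _).prod (convex_Ici _))

theorem isClosed_sirDomain (μ₀ : ℝ) : IsClosed (sirDomain μ₀) :=
  isClosed_Ici.prod (isClosed_Ici.prod isClosed_Ici)

theorem continuous_sirOperator {β γ : ℝ → ℝ} {v : ℝ × ℝ × ℝ → ℝ} (hβ : Continuous β)
    (hγ : Continuous γ) (hv : ContDiff ℝ 1 v) : Continuous (sirOperator β γ v) := by
  have := hv.continuous_fderiv one_ne_zero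
  have := hv.continuous
  unfold sirOperator sirHamiltonian
  fun_prop

theorem sirHamiltonian_lt {β γ x y ε v₁ v₂ a₁ a₂ b₁ b₂ c₁ c₂ : ℝ} (hβ : 0 ≤ β) (hγ : 0 ≤ γ)
    (hx : 0 ≤ x) (hy : 0 ≤ y) (hε : 0 ≤ ε) (hcv : c₁ - c₂ < v₁ - v₂)
    (ha : 0 < x → ε ≤ a₁ - a₂) (hb : ε * ((γ - β * x) * y) ≤ (b₁ - b₂) * ((γ - β * x) * y)) :
    sirHamiltonian β γ x y v₂ a₂ b₂ c₂ < sirHamiltonian β γ x y v₁ a₁ b₁ c₁ := by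
  have hxa : β * x * y * ε ≤ β * x * y * (a₁ - a₂) - x * (max (-a₁) 0 - max (-a₂) 0) := by
    rcases hx.eq_or_lt with rfl | hx
    · simp
    have hmax : max (-a₁) 0 ≤ max (-a₂) 0 := max_le_max (by linarith [ha hx]) le_rfl
    nlinarith [mul_le_mul_of_nonneg_left (ha hx) (by positivity : 0 ≤ β * x * y)]
  unfold sirHamiltonian
  nlinarith [mul_nonneg (mul_nonneg hγ hy) hε]

theorem tendsto_barrier_cocompact {μ₀ : ℝ} (hμ₀ : 0 < μ₀) :
    Tendsto (barrier μ₀) (cocompact _ ⊓ 𝓟 (sirDomain μ₀)) atTop := by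
  set κ := min 1 (μ₀ / 2)
  have hκ : 0 < κ := lt_min one_pos (half_pos hμ₀)
  have hle : ∀ p ∈ sirDomain μ₀, κ * ‖p‖ ≤ barrier μ₀ p := by
    rintro ⟨x, y, t⟩ ⟨hx, hy, ht⟩
    simp only [mem_Ici] at hx hy ht
    have hnorm : ‖(x, y, t)‖ ≤ x + y + t := by
      simp only [Prod.norm_def, Real.norm_eq_abs, abs_of_nonneg hx, abs_of_nonneg ht,
        abs_of_nonneg (hμ₀.le.trans hy)]
      exact max_le (by linarith) (max_le (by linarith) (by linarith))
    have h1 : κ ≤ 1 := min_le_left _ _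
    have h2 : κ ≤ μ₀ / 2 := min_le_right _ _
    simp only [barrier_apply]
    nlinarith [mul_le_mul_of_nonneg_left hnorm hκ.le]
  exact tendsto_atTop_mono' _ (eventually_inf_principal.2 (Eventually.of_forall hle))
    ((tendsto_norm_cocompact_atTop.const_mul_atTop hκ).mono_left inf_le_left)

section Comparison

variable {β γ : ℝ → ℝ} {β₁ γ₂ μ₀ ε : ℝ} {v₁ v₂ : ℝ × ℝ × ℝ → ℝ}

theorem exists_isMaxOn_sub_sub_mul_barrier (hμ₀ : 0 < μ₀) (hε : 0 < ε) (hv₁ : Continuous v₁)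
    (hv₂ : Continuous v₂) (hv₁b : BddAbove (range v₁)) (hv₂b : BddBelow (range v₂))
    {p₀ : ℝ × ℝ × ℝ} (hp₀ : p₀ ∈ sirDomain μ₀) :
    ∃ q ∈ sirDomain μ₀, IsMaxOn (fun p ↦ v₁ p - v₂ p - ε * barrier μ₀ p) (sirDomain μ₀) q := by
  obtain ⟨M₁, hM₁⟩ := hv₁b
  obtain ⟨M₂, hM₂⟩ := hv₂b
  refine (Continuous.continuousOn (by fun_prop)).exists_isMaxOn' (isClosed_sirDomain μ₀) hp₀ ?_
  filter_upwards [((tendsto_barrier_cocompact hμ₀).const_mul_atTop hε).eventually_ge_atTop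
    (M₁ - M₂ - (v₁ p₀ - v₂ p₀ - ε * barrier μ₀ p₀))] with p hp
  linarith [hM₁ (mem_range_self p), hM₂ (mem_range_self p)]

theorem sirOperator_lt_of_forall_fderiv_sub_le (hβ₁ : 0 < β₁) (hβ : ∀ t ≥ 0, β₁ ≤ β t)
    (hγ : ∀ t ≥ 0, γ t ∈ Icc 0 γ₂) (hμ₀ : 0 < μ₀) (hε : 0 < ε)
    (hbd : ∀ x ∈ Icc 0 (γ₂ / β₁), ∀ t ≥ 0, v₁ (x, μ₀, t) ≤ v₂ (x, μ₀, t))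
    {x y t : ℝ} (hx : 0 ≤ x) (hy : μ₀ ≤ y) (ht : 0 ≤ t)
    (hgt : ε * barrier μ₀ (x, y, t) < v₁ (x, y, t) - v₂ (x, y, t))
    (hfo : ∀ (r : ℝ) (e : ℝ × ℝ × ℝ), 0 < r → (x, y, t) + r • e ∈ sirDomain μ₀ →
      fderiv ℝ v₁ (x, y, t) e - fderiv ℝ v₂ (x, y, t) e ≤ ε * barrier μ₀ e) :
    sirOperator β γ v₂ (x, y, t) < sirOperator β γ v₁ (x, y, t) := by
  have hw : μ₀ / 2 < barrier μ₀ (x, y, t) := by simp only [barrier_apply]; nlinarith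
  have hgt' : ε * (μ₀ / 2) < v₁ (x, y, t) - v₂ (x, y, t) :=
    (mul_lt_mul_of_pos_left hw hε).trans hgt
  have hcv : fderiv ℝ v₁ (x, y, t) (0, 0, 1) - fderiv ℝ v₂ (x, y, t) (0, 0, 1)
      < v₁ (x, y, t) - v₂ (x, y, t) := by
    have := hfo 1 (0, 0, 1) one_pos (by simpa using ⟨hx, hy, by linarith⟩)
    simp only [barrier_apply] at this
    linarith
  have ha : 0 < x → ε ≤ fderiv ℝ v₁ (x, y, t) (1, 0, 0) - fderiv ℝ v₂ (x, y, t) (1, 0, 0) :=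
    fun hx' ↦ by
      have := hfo x (-(1, 0, 0)) hx' (by simpa using ⟨hy, ht⟩)
      simp only [map_neg, barrier_apply] at this
      norm_num at this
      linarith
  have hb_le : fderiv ℝ v₁ (x, y, t) (0, 1, 0) - fderiv ℝ v₂ (x, y, t) (0, 1, 0) ≤ ε := by
    simpa using hfo 1 (0, 1, 0) one_pos (by simpa using ⟨hx, by linarith, ht⟩)
  have hb : ε * ((γ t - β t * x) * y) ≤ (fderiv ℝ v₁ (x, y, t) (0, 1, 0) -
      fderiv ℝ v₂ (x, y, t) (0, 1, 0)) * ((γ t - β t * x) * y) := by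
    rcases hy.eq_or_lt with rfl | hy'
    · have hxA : γ₂ / β₁ < x := by
        by_contra! hxA
        linarith [hbd x ⟨hx, hxA⟩ t ht, mul_pos hε hμ₀]
      have hdrift : γ t - β t * x ≤ 0 := by
        nlinarith [(div_lt_iff₀ hβ₁).1 hxA, (hγ t ht).2, hβ t ht]
      exact mul_le_mul_of_nonpos_right hb_le (mul_nonpos_of_nonpos_of_nonneg hdrift hμ₀.le)
    · have := hfo (y - μ₀) (-(0, 1, 0)) (sub_pos.2 hy') (by simp [hx, ht])
      simp only [map_neg, barrier_apply] at this
      norm_num at this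
      rw [le_antisymm hb_le (by linarith)]
  exact sirHamiltonian_lt (hβ₁.trans_le (hβ t ht)).le (hγ t ht).1 hx (hμ₀.le.trans hy) hε.le
    hcv ha hb

theorem sub_le_mul_barrier (hβ₁ : 0 < β₁) (hβ : ∀ t ≥ 0, β₁ ≤ β t)
    (hγ : ∀ t ≥ 0, γ t ∈ Icc 0 γ₂) (hμ₀ : 0 < μ₀) (hε : 0 < ε)
    (hv₁ : ContDiff ℝ 1 v₁) (hv₂ : ContDiff ℝ 1 v₂)
    (hv₁b : BddAbove (range v₁)) (hv₂b : BddBelow (range v₂))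
    (hsub : ∀ p ∈ sirDomain μ₀, sirOperator β γ v₁ p ≤ 0)
    (hsuper : ∀ p ∈ sirDomain μ₀, 0 ≤ sirOperator β γ v₂ p)
    (hbd : ∀ x ∈ Icc 0 (γ₂ / β₁), ∀ t ≥ 0, v₁ (x, μ₀, t) ≤ v₂ (x, μ₀, t)) :
    ∀ p ∈ sirDomain μ₀, v₁ p - v₂ p ≤ ε * barrier μ₀ p := by
  by_contra! ⟨p₀, hp₀, hlt⟩
  obtain ⟨q, hq, hmax⟩ := exists_isMaxOn_sub_sub_mul_barrier hμ₀ hε hv₁.continuous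
    hv₂.continuous hv₁b hv₂b hp₀
  have hgt : ε * barrier μ₀ q < v₁ q - v₂ q := by linarith [isMaxOn_iff.1 hmax p₀ hp₀]
  have hD : HasFDerivAt (fun p ↦ v₁ p - v₂ p - ε * barrier μ₀ p)
      (fderiv ℝ v₁ q - fderiv ℝ v₂ q - ε • barrier μ₀) q :=
    ((hv₁.differentiable one_ne_zero q).hasFDerivAt.sub
      (hv₂.differentiable one_ne_zero q).hasFDerivAt).sub
      ((barrier μ₀).hasFDerivAt.const_mul ε)
  have hfo (r : ℝ) (e : ℝ × ℝ × ℝ) (hr : 0 < r) (he : q + r • e ∈ sirDomain μ₀) :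
      fderiv ℝ v₁ q e - fderiv ℝ v₂ q e ≤ ε * barrier μ₀ e := by
    have := hmax.hasFDerivAt_nonpos (convex_sirDomain μ₀) hq hD hr he
    simp only [sub_apply, smul_apply, smul_eq_mul] at this
    linarith
  obtain ⟨x, y, t⟩ := q
  obtain ⟨hx, hy, ht⟩ := mem_sirDomain.1 hq
  exact (sirOperator_lt_of_forall_fderiv_sub_le hβ₁ hβ hγ hμ₀ hε hbd hx hy ht hgt hfo).not_ge
    ((hsub _ hq).trans (hsuper _ hq))

theorem sirOperator_comparison (hβ₁ : 0 < β₁) (hβ : ∀ t ≥ 0, β₁ ≤ β t)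
    (hγ : ∀ t ≥ 0, γ t ∈ Icc 0 γ₂) (hμ₀ : 0 < μ₀)
    (hv₁ : ContDiff ℝ 1 v₁) (hv₂ : ContDiff ℝ 1 v₂)
    (hv₁b : BddAbove (range v₁)) (hv₂b : BddBelow (range v₂))
    (hsub : ∀ p ∈ sirDomain μ₀, sirOperator β γ v₁ p ≤ 0)
    (hsuper : ∀ p ∈ sirDomain μ₀, 0 ≤ sirOperator β γ v₂ p)
    (hbd : ∀ x ∈ Icc 0 (γ₂ / β₁), ∀ t ≥ 0, v₁ (x, μ₀, t) ≤ v₂ (x, μ₀, t)) :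
    ∀ p ∈ sirDomain μ₀, v₁ p ≤ v₂ p := by
  intro p hp
  obtain ⟨hx, hy, ht⟩ := mem_sirDomain.1 hp
  have hw : 0 < barrier μ₀ p := by simp only [barrier_apply]; nlinarith
  refine le_of_forall_pos_le_add fun δ hδ ↦ ?_
  have := sub_le_mul_barrier hβ₁ hβ hγ hμ₀ (div_pos hδ hw) hv₁ hv₂ hv₁b hv₂b hsub hsuper hbd p hp
  rw [div_mul_cancel₀ δ hw.ne'] at this
  linarith

end Comparison

theorem sir_smooth_comparison_general
    (β γ : ℝ → ℝ) (β₁ β₂ γ₁ γ₂ μ₀ : ℝ)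
    (hβ₁ : 0 < β₁) (hγ₁ : 0 < γ₁)
    (hβc : Continuous β) (hγc : Continuous γ)
    (hβ : ∀ t ≥ (0:ℝ), β t ∈ Set.Icc β₁ β₂)
    (hγ : ∀ t ≥ (0:ℝ), γ t ∈ Set.Icc γ₁ γ₂) (hμ₀ : 0 < μ₀)
    (v₁ v₂ : ℝ × ℝ × ℝ → ℝ)
    (hv₁ : ContDiff ℝ 1 v₁) (hv₂ : ContDiff ℝ 1 v₂)
    (hv₁b : ∃ M : ℝ, ∀ p, |v₁ p| ≤ M) (hv₂b : ∃ M : ℝ, ∀ p, |v₂ p| ≤ M)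
    (heq : ∀ v ∈ ({v₁, v₂} : Set (ℝ × ℝ × ℝ → ℝ)),
      ∀ p ∈ Set.Ioi (0:ℝ) ×ˢ Set.Ioi μ₀ ×ˢ Set.Ioi (0:ℝ),
        -(fderiv ℝ v p (0, 0, 1)) + v p +
            β p.2.2 * p.1 * p.2.1 * fderiv ℝ v p (1, 0, 0) -
            p.1 * max (-(fderiv ℝ v p (1, 0, 0))) 0 +
            (γ p.2.2 - β p.2.2 * p.1) * p.2.1 * fderiv ℝ v p (0, 1, 0) = 0)
    -- boundary conditions on the effective boundary
    (hbd₁ : ∀ x ∈ Set.Icc (0:ℝ) (γ₂ / β₁), ∀ t ≥ (0:ℝ), v₁ (x, μ₀, t) = v₂ (x, μ₀, t)) :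
    ∀ p ∈ closure (Set.Ioi (0:ℝ) ×ˢ Set.Ioi μ₀ ×ˢ Set.Ioi (0:ℝ)), v₁ p = v₂ p := by
  have hE (v) (hv : v ∈ ({v₁, v₂} : Set (ℝ × ℝ × ℝ → ℝ))) (hvC : ContDiff ℝ 1 v) :
      EqOn (sirOperator β γ v) 0 (sirDomain μ₀) :=
    closure_Ioi_prod_Ioi_prod_Ioi μ₀ ▸
      EqOn.closure (heq v hv) (continuous_sirOperator hβc hγc hvC) continuous_const
  have hE₁ := hE v₁ (by simp) hv₁
  have hE₂ := hE v₂ (by simp) hv₂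
  have hbdd (v : ℝ × ℝ × ℝ → ℝ) : (∃ M, ∀ p, |v p| ≤ M) → BddAbove (range v) ∧ BddBelow (range v)
    | ⟨M, hM⟩ => ⟨⟨M, forall_mem_range.2 fun p ↦ (abs_le.1 (hM p)).2⟩,
        ⟨-M, forall_mem_range.2 fun p ↦ (abs_le.1 (hM p)).1⟩⟩
  have hβ' (t : ℝ) (ht : t ≥ 0) : β₁ ≤ β t := (hβ t ht).1
  have hγ' (t : ℝ) (ht : t ≥ 0) : γ t ∈ Icc 0 γ₂ := ⟨hγ₁.le.trans (hγ t ht).1, (hγ t ht).2⟩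
  intro p hp
  rw [closure_Ioi_prod_Ioi_prod_Ioi] at hp
  exact le_antisymm
    (sirOperator_comparison hβ₁ hβ' hγ' hμ₀ hv₁ hv₂ (hbdd v₁ hv₁b).1 (hbdd v₂ hv₂b).2
      (fun q hq ↦ (hE₁ hq).le) (fun q hq ↦ (hE₂ hq).ge) (fun x hx t ht ↦ (hbd₁ x hx t ht).le) p hp)
    (sirOperator_comparison hβ₁ hβ' hγ' hμ₀ hv₂ hv₁ (hbdd v₂ hv₂b).1 (hbdd v₁ hv₁b).2
      (fun q hq ↦ (hE₂ hq).le) (fun q hq ↦ (hE₁ hq).ge) (fun x hx t ht ↦ (hbd₁ x hx t ht).ge) p hp)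

/-- Comparison/uniqueness for bounded C¹ solutions of the transformed
equation with prescribed values on the effective boundary. Points are `(x, y, t)`. -/
theorem sir_smooth_comparison
    (β γ : ℝ → ℝ) (β₁ β₂ γ₁ γ₂ μ₀ : ℝ)
    (hβ₁ : 0 < β₁) (hβ₁₂ : β₁ ≤ β₂) (hγ₁ : 0 < γ₁) (hγ₁₂ : γ₁ ≤ γ₂)
    (hβc : Continuous β) (hγc : Continuous γ)
    (hβ : ∀ t ≥ (0:ℝ), β t ∈ Set.Icc β₁ β₂)
    (hγ : ∀ t ≥ (0:ℝ), γ t ∈ Set.Icc γ₁ γ₂) (hμ₀ : 0 < μ₀)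
    (v₁ v₂ : ℝ × ℝ × ℝ → ℝ)
    (hv₁ : ContDiff ℝ 1 v₁) (hv₂ : ContDiff ℝ 1 v₂)
    (hv₁b : ∃ M : ℝ, ∀ p, |v₁ p| ≤ M) (hv₂b : ∃ M : ℝ, ∀ p, |v₂ p| ≤ M)
    (heq : ∀ v ∈ ({v₁, v₂} : Set (ℝ × ℝ × ℝ → ℝ)),
      ∀ p ∈ Set.Ioi (0:ℝ) ×ˢ Set.Ioi μ₀ ×ˢ Set.Ioi (0:ℝ),
        -(fderiv ℝ v p (0, 0, 1)) + v p +
            β p.2.2 * p.1 * p.2.1 * fderiv ℝ v p (1, 0, 0) -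
            p.1 * max (-(fderiv ℝ v p (1, 0, 0))) 0 +
            (γ p.2.2 - β p.2.2 * p.1) * p.2.1 * fderiv ℝ v p (0, 1, 0) = 0)
    -- boundary conditions on the effective boundary
    (hbd₁ : ∀ x ∈ Set.Icc (0:ℝ) (γ₂ / β₁), ∀ t ≥ (0:ℝ), v₁ (x, μ₀, t) = v₂ (x, μ₀, t))
    (hbd₂ : ∀ y ≥ μ₀, ∀ t ≥ (0:ℝ), v₁ (0, y, t) = v₂ (0, y, t))
    (hbd₃ : ∀ x ∈ Set.Icc (0:ℝ) (γ₂ / β₁), ∀ y ≥ μ₀, v₁ (x, y, 0) = v₂ (x, y, 0)) :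
    ∀ p ∈ closure (Set.Ioi (0:ℝ) ×ˢ Set.Ioi μ₀ ×ˢ Set.Ioi (0:ℝ)), v₁ p = v₂ p :=
  sir_smooth_comparison_general β γ β₁ β₂ γ₁ γ₂ μ₀ hβ₁ hγ₁ hβc hγc hβ hγ hμ₀ v₁ v₂ hv₁ hv₂ hv₁b hv₂b
    heq hbd₁
end

section
/- Barrier strict supersolution: let g: [0,∞) → [0,∞) be a nondecreasing C¹ function vanishing on [0, γ₂/β₁] and positive on (γ₂/β₁, ∞), and define w(x,y,t) = (μ₀/2)t + x + y + g(x)/(y - μ₀) for x ≥ 0, y > μ₀, t ≥ 0. Then w satisfies -∂_t w + w + β(t)xy ∂_x w + (γ(t) - β(t)x) y ∂_y w > 0 at every point of (γ₂/β₁, ∞) × (μ₀, ∞) × (0, ∞), for any β(t) ∈ [β₁, β₂] and γ(t) ∈ [γ₁, γ₂] with all constants positive. -/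
/-!
Once the `b·x·y` terms cancel, the operator applied to `w` equals
`μ₀/2·(t - 1) + y + x + c·y + g/(y-μ₀) + b·x·y·g'/(y-μ₀) + (b·x - c)·y·g/(y-μ₀)²`.
Beyond `x = γ₂/β₁` we have `b·x > γ₂ ≥ c`, and `g ≥ 0`, `g' ≥ 0` by monotonicity, so every term
after the first two is nonnegative, while `μ₀/2·(t - 1) + y > μ₀/2·t > 0` because `y > μ₀`.
-/

theorem barrier_operator_pos {μ₀ t x y b c G G' : ℝ} (hμ₀ : 0 < μ₀) (hy : μ₀ < y) (ht : 0 < t)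
    (hx : 0 ≤ x) (hc : 0 ≤ c) (hcb : c ≤ b * x) (hG : 0 ≤ G) (hG' : 0 ≤ G') :
    0 < -(μ₀ / 2) + (μ₀ / 2 * t + x + y + G / (y - μ₀)) +
      b * x * y * (1 + G' / (y - μ₀)) + (c - b * x) * y * (1 - G / (y - μ₀) ^ 2) := by
  have hd : 0 < y - μ₀ := sub_pos.mpr hy
  have hy₀ : 0 < y := hμ₀.trans hy
  have hcancel : -(μ₀ / 2) + (μ₀ / 2 * t + x + y + G / (y - μ₀)) +
      b * x * y * (1 + G' / (y - μ₀)) + (c - b * x) * y * (1 - G / (y - μ₀) ^ 2) =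
      (μ₀ / 2 * t + (y - μ₀ / 2)) + x + c * y + G / (y - μ₀) +
        (b * x) * y * (G' / (y - μ₀)) + (b * x - c) * y * (G / (y - μ₀) ^ 2) := by
    ring
  have hcy : 0 ≤ c * y := mul_nonneg hc hy₀.le
  have hGd : 0 ≤ G / (y - μ₀) := div_nonneg hG hd.le
  have hG'term : 0 ≤ (b * x) * y * (G' / (y - μ₀)) :=
    mul_nonneg (mul_nonneg (hc.trans hcb) hy₀.le) (div_nonneg hG' hd.le)
  have hGterm : 0 ≤ (b * x - c) * y * (G / (y - μ₀) ^ 2) :=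
    mul_nonneg (mul_nonneg (sub_nonneg.mpr hcb) hy₀.le) (by positivity)
  rw [hcancel]
  linarith [mul_pos (half_pos hμ₀) ht]

theorem sir_barrier_strict_supersolution_general
    (β₁ β₂ γ₁ γ₂ μ₀ : ℝ)
    (hβ₁ : 0 < β₁) (hγ₁ : 0 < γ₁) (hμ₀ : 0 < μ₀)
    (g : ℝ → ℝ) (hgmono : Monotone g)
    (hgnonneg : ∀ x ≥ (0:ℝ), 0 ≤ g x) :
    ∀ x > γ₂ / β₁, ∀ y > μ₀, ∀ t > (0:ℝ),
      ∀ b ∈ Set.Icc β₁ β₂, ∀ c ∈ Set.Icc γ₁ γ₂,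
        -- -∂ₜw + w + b·x·y·∂ₓw + (c - b·x)·y·∂_y w > 0, with
        -- ∂ₜw = μ₀/2, ∂ₓw = 1 + g'(x)/(y-μ₀), ∂_yw = 1 - g(x)/(y-μ₀)²
        0 < -(μ₀ / 2) + (μ₀ / 2 * t + x + y + g x / (y - μ₀)) +
            b * x * y * (1 + deriv g x / (y - μ₀)) +
            (c - b * x) * y * (1 - g x / (y - μ₀) ^ 2) := by
  intro x hx y hy t ht b hb c hc
  have hγ₂ : 0 < γ₂ := hγ₁.trans_le (hc.1.trans hc.2)
  have hx₀ : 0 < x := (div_pos hγ₂ hβ₁).trans hx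
  have hcb : c ≤ b * x :=
    calc c ≤ γ₂ := hc.2
      _ ≤ β₁ * x := ((div_lt_iff₀' hβ₁).mp hx).le
      _ ≤ b * x := mul_le_mul_of_nonneg_right hb.1 hx₀.le
  exact barrier_operator_pos hμ₀ hy ht hx₀.le (hγ₁.le.trans hc.1) hcb (hgnonneg x hx₀.le)
    hgmono.deriv_nonneg

/-- The barrier `w(x,y,t) = (μ₀/2) t + x + y + g(x)/(y - μ₀)` is a strict
supersolution of the transformed equation on `(γ₂/β₁, ∞) × (μ₀, ∞) × (0, ∞)`. -/
theorem sir_barrier_strict_supersolution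
    (β₁ β₂ γ₁ γ₂ μ₀ : ℝ)
    (hβ₁ : 0 < β₁) (hβ₁₂ : β₁ ≤ β₂) (hγ₁ : 0 < γ₁) (hγ₁₂ : γ₁ ≤ γ₂) (hμ₀ : 0 < μ₀)
    (g : ℝ → ℝ) (hg : ContDiff ℝ 1 g) (hgmono : Monotone g)
    (hgnonneg : ∀ x ≥ (0:ℝ), 0 ≤ g x)
    (hg0 : ∀ x ∈ Set.Icc (0:ℝ) (γ₂ / β₁), g x = 0)
    (hgpos : ∀ x > γ₂ / β₁, 0 < g x) :
    ∀ x > γ₂ / β₁, ∀ y > μ₀, ∀ t > (0:ℝ),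
      ∀ b ∈ Set.Icc β₁ β₂, ∀ c ∈ Set.Icc γ₁ γ₂,
        -- -∂ₜw + w + b·x·y·∂ₓw + (c - b·x)·y·∂_y w > 0, with
        -- ∂ₜw = μ₀/2, ∂ₓw = 1 + g'(x)/(y-μ₀), ∂_yw = 1 - g(x)/(y-μ₀)²
        0 < -(μ₀ / 2) + (μ₀ / 2 * t + x + y + g x / (y - μ₀)) +
            b * x * y * (1 + deriv g x / (y - μ₀)) +
            (c - b * x) * y * (1 - g x / (y - μ₀) ^ 2) :=
  sir_barrier_strict_supersolution_general β₁ β₂ γ₁ γ₂ μ₀ hβ₁ hγ₁ hμ₀ g hgmono hgnonneg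
end
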